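/- Let x_L < x_R be reals with midpoint M = (x_L+x_R)/2, and let μ be a Borel probability measure on ℝ with finite first moment. Then ∫ max(|y − x_L|, |y − x_R|) d(T_{x_L,x_R}μ)(y) = ∫ max(|y − x_L|, |y − x_R|) dμ(y); that is, the transformation T preserves the expected egalitarian social cost for the two-agent profile (x_L, x_R). -/

import Mathlib

open MeasureTheory

/-- The transformation `T` from the paper: given `x_L < x_R` with midpoint
`M = (x_L+x_R)/2` and a measure `μ`, the transformed measure agrees with `μ` outside
`[x_L, x_R]`, assigns measure zero to `(x_L,M) ∪ (M,x_R)`, and moves the mass `p_ℓ` of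
`(x_L,M)` (with conditional mean `π_ℓ = q_ℓ x_L + (1-q_ℓ) M`) onto the points `x_L` and
`M` with weights `q_ℓ p_ℓ` and `(1-q_ℓ) p_ℓ`, and symmetrically the mass `p_r` of
`(M,x_R)` onto `x_R` and `M`. (When `p_ℓ = 0` the products `q_ℓ p_ℓ` and `(1-q_ℓ) p_ℓ`
vanish, and similarly on the right.) -/
noncomputable def Tmeas (xL xR : ℝ) (μ : Measure ℝ) : Measure ℝ :=
  let M := (xL + xR) / 2
  let pl := (μ (Set.Ioo xL M)).toReal
  let pr := (μ (Set.Ioo M xR)).toReal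
  let πl := (∫ y in Set.Ioo xL M, y ∂μ) / pl
  let πr := (∫ y in Set.Ioo M xR, y ∂μ) / pr
  let ql := (M - πl) / (M - xL)
  let qr := (πr - M) / (xR - M)
  μ.restrict (Set.Iio xL ∪ Set.Ioi xR)
    + (μ {xL} + ENNReal.ofReal (ql * pl)) • Measure.dirac xL
    + (μ {M} + ENNReal.ofReal ((1 - ql) * pl + (1 - qr) * pr)) • Measure.dirac M
    + (μ {xR} + ENNReal.ofReal (qr * pr)) • Measure.dirac xR

/-!
The cost `y ↦ max |y - x_L| |y - x_R|` equals `x_R - y` left of the midpoint `M` and `y - x_L`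
right of it, so it is affine on `[x_L, M]` and on `[M, x_R]`. On each half, `T` replaces the
restriction of `μ` by a measure on the two endpoints with the same mass and the same barycenter,
and the integral of an affine function only depends on these two quantities.
-/

open Set

section Decomposition

variable {μ : Measure ℝ} {g : ℝ → ℝ}

theorem setIntegral_insert {a : ℝ} {s : Set ℝ} (ha : a ∉ s) (hs : MeasurableSet s)
    (hg : IntegrableOn g (insert a s) μ) :
    ∫ y in insert a s, g y ∂μ = μ.real {a} * g a + ∫ y in s, g y ∂μ := by
  rw [insert_eq] at hg ⊢
  rw [setIntegral_union (disjoint_singleton_left.2 ha) hs hg.left_of_union hg.right_of_union,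
    integral_singleton, smul_eq_mul]

theorem compl_Iio_union_Ioi_eq {a c b : ℝ} (hac : a < c) (hcb : c < b) :
    (Iio a ∪ Ioi b)ᶜ = insert b (insert a (Ioo a c ∪ insert c (Ioo c b))) := by
  rw [Ioo_insert_left hcb, Ioo_union_Ico_eq_Ioo hac hcb.le, Ioo_insert_left (hac.trans hcb),
    Ico_insert_right (hac.trans hcb).le, compl_union, compl_Iio, compl_Ioi, Ici_inter_Iic]

theorem integral_eq_setIntegral_Iio_union_Ioi_add {a c b : ℝ} (hac : a < c) (hcb : c < b)
    (hg : Integrable g μ) :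
    ∫ y, g y ∂μ = ∫ y in Iio a ∪ Ioi b, g y ∂μ + μ.real {a} * g a + ∫ y in Ioo a c, g y ∂μ
      + μ.real {c} * g c + ∫ y in Ioo c b, g y ∂μ + μ.real {b} * g b := by
  rw [← integral_add_compl (measurableSet_Iio.union measurableSet_Ioi) hg,
    compl_Iio_union_Ioi_eq hac hcb,
    setIntegral_insert (by simp; grind) (by measurability) hg.integrableOn,
    setIntegral_insert (by simp; grind) (by measurability) hg.integrableOn,
    setIntegral_union (s := Ioo a c) (by simp [disjoint_left]; grind) (by measurability)
      hg.integrableOn hg.integrableOn,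
    setIntegral_insert (by simp) measurableSet_Ioo hg.integrableOn]
  ring

end Decomposition

section Dirac

variable {ν : Measure ℝ} {g : ℝ → ℝ} {c : ENNReal}

theorem MeasureTheory.Integrable.add_smul_dirac (hg : Integrable g ν) (hc : c ≠ ⊤) (x : ℝ) :
    Integrable g (ν + c • Measure.dirac x) :=
  hg.add_measure ((integrable_dirac (by simp)).smul_measure hc)

theorem integral_add_smul_dirac (hg : Integrable g ν) (hc : c ≠ ⊤) (x : ℝ) :
    ∫ y, g y ∂(ν + c • Measure.dirac x) = ∫ y, g y ∂ν + c.toReal * g x := by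
  rw [integral_add_measure hg ((integrable_dirac (by simp)).smul_measure hc),
    integral_smul_measure, integral_dirac, smul_eq_mul]

theorem integral_add_three_smul_dirac (hg : Integrable g ν) {c₁ c₂ c₃ : ENNReal}
    (h₁ : c₁ ≠ ⊤) (h₂ : c₂ ≠ ⊤) (h₃ : c₃ ≠ ⊤) (x₁ x₂ x₃ : ℝ) :
    ∫ y, g y ∂(ν + c₁ • Measure.dirac x₁ + c₂ • Measure.dirac x₂ + c₃ • Measure.dirac x₃)
      = ∫ y, g y ∂ν + c₁.toReal * g x₁ + c₂.toReal * g x₂ + c₃.toReal * g x₃ := by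
  rw [integral_add_smul_dirac ((hg.add_smul_dirac h₁ x₁).add_smul_dirac h₂ x₂) h₃,
    integral_add_smul_dirac (hg.add_smul_dirac h₁ x₁) h₂, integral_add_smul_dirac hg h₁]

theorem toReal_measure_add_ofReal [IsFiniteMeasure ν] (s : Set ℝ) {w : ℝ} (hw : 0 ≤ w) :
    (ν s + ENNReal.ofReal w).toReal = ν.real s + w := by
  rw [ENNReal.toReal_add (measure_ne_top ν s) ENNReal.ofReal_ne_top, ENNReal.toReal_ofReal hw,
    measureReal_def]

end Dirac

section Barycenter

variable {μ : Measure ℝ} [IsFiniteMeasure μ] {s : Set ℝ} {a b q : ℝ}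

/-- Free of division, this also covers `μ.real s = 0`, where both sides vanish. -/
theorem weight_mul_sub_eq_of_barycenter
    (hq : (∫ y in s, y ∂μ) / μ.real s = q * a + (1 - q) * b) :
    q * μ.real s * (a - b) = ∫ y in s, y ∂μ - b * μ.real s := by
  by_cases hp : μ.real s = 0
  · rw [measureReal_eq_zero_iff] at hp
    simp [Measure.restrict_eq_zero.2 hp, measureReal_def, hp]
  · rw [div_eq_iff hp] at hq
    linear_combination -hq

theorem weights_nonneg_of_barycenter (hs : MeasurableSet s)
    (hint : IntegrableOn (fun y => y) s μ) (hab : a < b) (hsab : s ⊆ Icc a b)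
    (hq : (∫ y in s, y ∂μ) / μ.real s = q * a + (1 - q) * b) :
    0 ≤ q * μ.real s ∧ 0 ≤ (1 - q) * μ.real s := by
  have hlow : a * μ.real s ≤ ∫ y in s, y ∂μ :=
    setIntegral_ge_of_const_le_real hs (measure_ne_top μ s) (fun y hy => (hsab hy).1) hint
  have hup : ∫ y in s, y ∂μ ≤ b * μ.real s := by
    have := setIntegral_ge_of_const_le_real (c := -b) hs (measure_ne_top μ s)
      (fun y hy => neg_le_neg (hsab hy).2) hint.neg
    rw [integral_neg] at this
    linarith
  have := weight_mul_sub_eq_of_barycenter hq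
  constructor <;> nlinarith

theorem setIntegral_eq_of_barycenter {g : ℝ → ℝ} (hs : MeasurableSet s)
    (hint : IntegrableOn (fun y => y) s μ) (hab : a ≤ b) (hsab : s ⊆ Icc a b)
    (hq : (∫ y in s, y ∂μ) / μ.real s = q * a + (1 - q) * b) {c d : ℝ}
    (hg : ∀ y ∈ Icc a b, g y = c * y + d) :
    ∫ y in s, g y ∂μ = q * μ.real s * g a + (1 - q) * μ.real s * g b := by
  rw [setIntegral_congr_fun hs fun y hy => hg y (hsab hy), integral_add (hint.const_mul c)
    (integrableOn_const (measure_ne_top μ s)), integral_const_mul, setIntegral_const,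
    hg a (left_mem_Icc.2 hab), hg b (right_mem_Icc.2 hab), smul_eq_mul]
  linear_combination -c * weight_mul_sub_eq_of_barycenter hq

end Barycenter

theorem max_abs_sub_eq_of_le_midpoint {xL xR y : ℝ} (h : xL ≤ xR) (hy : y ≤ (xL + xR) / 2) :
    max |y - xL| |y - xR| = xR - y := by
  rw [abs_sub_comm y xR, abs_of_nonneg (by linarith : 0 ≤ xR - y)]
  exact max_eq_right (abs_sub_le_iff.2 ⟨by linarith, by linarith⟩)

theorem max_abs_sub_eq_of_midpoint_le {xL xR y : ℝ} (h : xL ≤ xR) (hy : (xL + xR) / 2 ≤ y) :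
    max |y - xL| |y - xR| = y - xL := by
  rw [abs_of_nonneg (by linarith : 0 ≤ y - xL)]
  exact max_eq_left (abs_sub_le_iff.2 ⟨by linarith, by linarith⟩)

/-- the transformation `T` preserves the expected egalitarian social cost
for the two-agent profile `(x_L, x_R)`. -/
theorem stmt2 (xL xR : ℝ) (h : xL < xR) (μ : Measure ℝ)
    (hprob : IsProbabilityMeasure μ) (hmom : Integrable (fun y => |y|) μ) :
    ∫ y, max |y - xL| |y - xR| ∂(Tmeas xL xR μ)
      = ∫ y, max |y - xL| |y - xR| ∂μ := by
  simp only [Tmeas, ← measureReal_def]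
  set M := (xL + xR) / 2 with hM
  set ql := (M - (∫ y in Ioo xL M, y ∂μ) / μ.real (Ioo xL M)) / (M - xL) with hql_def
  set qr := ((∫ y in Ioo M xR, y ∂μ) / μ.real (Ioo M xR) - M) / (xR - M) with hqr_def
  have hxLM : xL < M := by linarith
  have hMxR : M < xR := by linarith
  have hid : Integrable (fun y : ℝ => y) μ := (integrable_norm_iff aestronglyMeasurable_id).1 hmom
  have hf : Integrable (fun y => max |y - xL| |y - xR|) μ :=
    (hid.sub (integrable_const xL)).abs.sup (hid.sub (integrable_const xR)).abs
  have hql : (∫ y in Ioo xL M, y ∂μ) / μ.real (Ioo xL M) = ql * xL + (1 - ql) * M := by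
    rw [hql_def]; field_simp [sub_ne_zero.2 hxLM.ne']; ring
  -- `qr` weights the right endpoint `xR`; the barycenter lemmas weight the left one, here `M`
  have hqr :
      (∫ y in Ioo M xR, y ∂μ) / μ.real (Ioo M xR) = (1 - qr) * M + (1 - (1 - qr)) * xR := by
    rw [hqr_def]; field_simp [sub_ne_zero.2 hMxR.ne']; ring
  obtain ⟨hwl, hwl'⟩ := weights_nonneg_of_barycenter measurableSet_Ioo hid.integrableOn hxLM
    Ioo_subset_Icc_self hql
  obtain ⟨hwr', hwr⟩ := weights_nonneg_of_barycenter measurableSet_Ioo hid.integrableOn hMxR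
    Ioo_subset_Icc_self hqr
  have hleft := setIntegral_eq_of_barycenter (g := fun y => max |y - xL| |y - xR|)
    measurableSet_Ioo hid.integrableOn hxLM.le Ioo_subset_Icc_self hql (c := -1) (d := xR)
    fun y hy => by rw [max_abs_sub_eq_of_le_midpoint h.le hy.2]; ring
  have hright := setIntegral_eq_of_barycenter (g := fun y => max |y - xL| |y - xR|)
    measurableSet_Ioo hid.integrableOn hMxR.le Ioo_subset_Icc_self hqr (c := 1) (d := -xL)
    fun y hy => by rw [max_abs_sub_eq_of_midpoint_le h.le hy.1]; ring
  rw [sub_sub_cancel] at hwr hright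
  rw [integral_add_three_smul_dirac hf.restrict (by finiteness) (by finiteness) (by finiteness),
    toReal_measure_add_ofReal _ hwl, toReal_measure_add_ofReal _ hwr,
    toReal_measure_add_ofReal _ (add_nonneg hwl' hwr'),
    integral_eq_setIntegral_Iio_union_Ioi_add hxLM hMxR hf, hleft, hright]
  ring
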